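/- Let f, g, h be smooth periodic functions on Ω = M × (-1,1). Then ∫_M (∫_{-1}^1 f dz)(∫_{-1}^1 g h dz) dxdy ≤ C ‖f‖_{L²(Ω)} ‖g‖_{L²(Ω)}^{1/2} (‖g‖_{L²(Ω)}^{1/2} + ‖∇_H g‖_{L²(Ω)}^{1/2}) ‖h‖_{L²(Ω)}^{1/2} (‖h‖_{L²(Ω)}^{1/2} + ‖∇_H h‖_{L²(Ω)}^{1/2}), with C depending only on L₁, L₂. -/

import Mathlib

open MeasureTheory Real Set

set_option maxHeartbeats 2000000

noncomputable section

abbrev Pt := ℝ × ℝ × ℝ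

/-- partial derivative in `x`. -/
def pdx (f : Pt → ℝ) (p : Pt) : ℝ := deriv (fun t => f (t, p.2.1, p.2.2)) p.1
/-- partial derivative in `y`. -/
def pdy (f : Pt → ℝ) (p : Pt) : ℝ := deriv (fun t => f (p.1, t, p.2.2)) p.2.1
/-- partial derivative in `z`. -/
def pdz (f : Pt → ℝ) (p : Pt) : ℝ := deriv (fun t => f (p.1, p.2.1, t)) p.2.2

/-- full Laplacian. -/
def lap (f : Pt → ℝ) : Pt → ℝ := fun p => pdx (pdx f) p + pdy (pdy f) p + pdz (pdz f) p
/-- horizontal Laplacian. -/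
def lapH (f : Pt → ℝ) : Pt → ℝ := fun p => pdx (pdx f) p + pdy (pdy f) p

/-- squared full gradient. -/
def gradSq (f : Pt → ℝ) (p : Pt) : ℝ := (pdx f p)^2 + (pdy f p)^2 + (pdz f p)^2
/-- squared horizontal gradient. -/
def gradHSq (f : Pt → ℝ) (p : Pt) : ℝ := (pdx f p)^2 + (pdy f p)^2

/-- the horizontal domain `M = (0,L₁) × (0,L₂)`. -/
def MSet (L1 L2 : ℝ) : Set (ℝ × ℝ) := Ioo 0 L1 ×ˢ Ioo 0 L2
/-- the domain `Ω = M × (-1,1)`. -/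
def OmegaSet (L1 L2 : ℝ) : Set Pt := Ioo 0 L1 ×ˢ (Ioo 0 L2 ×ˢ Ioo (-1 : ℝ) 1)

/-- integral over `Ω`. -/
def intOn (L1 L2 : ℝ) (G : Pt → ℝ) : ℝ := ∫ p in OmegaSet L1 L2, G p

/-- periodicity in `x`, `y`, `z` with periods `L₁`, `L₂`, `2`. -/
def Periodic3 (L1 L2 : ℝ) (f : Pt → ℝ) : Prop :=
  (∀ p : Pt, f (p.1 + L1, p.2.1, p.2.2) = f p) ∧
  (∀ p : Pt, f (p.1, p.2.1 + L2, p.2.2) = f p) ∧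
  (∀ p : Pt, f (p.1, p.2.1, p.2.2 + 2) = f p)

/-- squared `L²(Ω)` norm. -/
def L2sq (L1 L2 : ℝ) (F : Pt → ℝ) : ℝ := intOn L1 L2 (fun p => (F p)^2)
/-- `L²(Ω)` norm. -/
def L2n (L1 L2 : ℝ) (F : Pt → ℝ) : ℝ := Real.sqrt (L2sq L1 L2 F)
/-- `L²(Ω)` norm of the horizontal gradient. -/
def L2gradH (L1 L2 : ℝ) (F : Pt → ℝ) : ℝ := Real.sqrt (intOn L1 L2 (gradHSq F))
/-- `L²(Ω)` norm of the full gradient. -/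
def L2grad (L1 L2 : ℝ) (F : Pt → ℝ) : ℝ := Real.sqrt (intOn L1 L2 (gradSq F))

/-- first component of a horizontal vector field. -/
def c1 (v : Pt → ℝ × ℝ) : Pt → ℝ := fun p => (v p).1
/-- second component of a horizontal vector field. -/
def c2 (v : Pt → ℝ × ℝ) : Pt → ℝ := fun p => (v p).2

/-- horizontal divergence. -/
def divH (v : Pt → ℝ × ℝ) : Pt → ℝ := fun p => pdx (c1 v) p + pdy (c2 v) p

/-- squared `L²(Ω)` norm of a horizontal vector field. -/
def vL2sq (L1 L2 : ℝ) (v : Pt → ℝ × ℝ) : ℝ := L2sq L1 L2 (c1 v) + L2sq L1 L2 (c2 v)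
def vL2n (L1 L2 : ℝ) (v : Pt → ℝ × ℝ) : ℝ := Real.sqrt (vL2sq L1 L2 v)
/-- squared `L²(Ω)` norm of the full gradient of a horizontal vector field. -/
def vGradSq (L1 L2 : ℝ) (v : Pt → ℝ × ℝ) : ℝ :=
  intOn L1 L2 (fun p => gradSq (c1 v) p + gradSq (c2 v) p)
def vGradn (L1 L2 : ℝ) (v : Pt → ℝ × ℝ) : ℝ := Real.sqrt (vGradSq L1 L2 v)
/-- squared `L²(Ω)` norm of the Laplacian of a horizontal vector field. -/
def vLapSq (L1 L2 : ℝ) (v : Pt → ℝ × ℝ) : ℝ :=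
  intOn L1 L2 (fun p => (lap (c1 v) p)^2 + (lap (c2 v) p)^2)
def vLapn (L1 L2 : ℝ) (v : Pt → ℝ × ℝ) : ℝ := Real.sqrt (vLapSq L1 L2 v)
/-- periodicity of a horizontal vector field. -/
def vPeriodic (L1 L2 : ℝ) (v : Pt → ℝ × ℝ) : Prop :=
  Periodic3 L1 L2 (c1 v) ∧ Periodic3 L1 L2 (c2 v)

open intervalIntegral

/-- Cauchy-Schwarz, squared form. -/
lemma cs_sq {α : Type*} [MeasurableSpace α] (μ : Measure α) {f g : α → ℝ}
    (hf2 : Integrable (fun x => f x ^ 2) μ) (hg2 : Integrable (fun x => g x ^ 2) μ)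
    (hfg : Integrable (fun x => f x * g x) μ) :
    (∫ x, f x * g x ∂μ) ^ 2 ≤ (∫ x, f x ^ 2 ∂μ) * (∫ x, g x ^ 2 ∂μ) := by
  set A := ∫ x, f x ^ 2 ∂μ with hA
  set B := ∫ x, g x ^ 2 ∂μ with hB
  set I := ∫ x, f x * g x ∂μ with hI
  have key : ∀ t : ℝ, 0 ≤ A * (t * t) + (-2 * I) * t + B := by
    intro t
    have h0 : 0 ≤ ∫ x, (t * f x - g x) ^ 2 ∂μ := integral_nonneg fun x => sq_nonneg _
    have e1 : (∫ x, (t * f x - g x) ^ 2 ∂μ)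
        = ∫ x, (t ^ 2 * f x ^ 2 - 2 * t * (f x * g x) + g x ^ 2) ∂μ := by
      congr 1; funext x; ring
    have e2 : (∫ x, (t ^ 2 * f x ^ 2 - 2 * t * (f x * g x) + g x ^ 2) ∂μ)
        = (∫ x, (t ^ 2 * f x ^ 2 - 2 * t * (f x * g x)) ∂μ) + B :=
      integral_add ((hf2.const_mul _).sub (hfg.const_mul _)) hg2
    have e3 : (∫ x, (t ^ 2 * f x ^ 2 - 2 * t * (f x * g x)) ∂μ)
        = (∫ x, t ^ 2 * f x ^ 2 ∂μ) - ∫ x, 2 * t * (f x * g x) ∂μ :=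
      integral_sub (hf2.const_mul _) (hfg.const_mul _)
    have e4 : (∫ x, t ^ 2 * f x ^ 2 ∂μ) = t ^ 2 * A := integral_const_mul _ _
    have e5 : (∫ x, 2 * t * (f x * g x) ∂μ) = 2 * t * I := integral_const_mul _ _
    nlinarith [h0, e1, e2, e3, e4, e5]
  have hd := discrim_le_zero key
  rw [discrim] at hd
  nlinarith
/-- Cauchy-Schwarz. -/
lemma cs {α : Type*} [MeasurableSpace α] (μ : Measure α) {f g : α → ℝ}
    (hf2 : Integrable (fun x => f x ^ 2) μ) (hg2 : Integrable (fun x => g x ^ 2) μ)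
    (hfg : Integrable (fun x => f x * g x) μ) :
    ∫ x, f x * g x ∂μ ≤ Real.sqrt (∫ x, f x ^ 2 ∂μ) * Real.sqrt (∫ x, g x ^ 2 ∂μ) := by
  have h := cs_sq μ hf2 hg2 hfg
  have hA : 0 ≤ ∫ x, f x ^ 2 ∂μ := integral_nonneg fun x => sq_nonneg _
  have hB : 0 ≤ ∫ x, g x ^ 2 ∂μ := integral_nonneg fun x => sq_nonneg _
  calc ∫ x, f x * g x ∂μ ≤ |∫ x, f x * g x ∂μ| := le_abs_self _
    _ = Real.sqrt ((∫ x, f x * g x ∂μ) ^ 2) := (Real.sqrt_sq_eq_abs _).symm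
    _ ≤ Real.sqrt ((∫ x, f x ^ 2 ∂μ) * (∫ x, g x ^ 2 ∂μ)) := Real.sqrt_le_sqrt h
    _ = _ := Real.sqrt_mul hA _

lemma sqrt_add_le (a b : ℝ) (ha : 0 ≤ a) (hb : 0 ≤ b) :
    Real.sqrt (a + b) ≤ Real.sqrt a + Real.sqrt b := by
  rw [show a + b = Real.sqrt a ^ 2 + Real.sqrt b ^ 2 by
    rw [Real.sq_sqrt ha, Real.sq_sqrt hb]]
  have h : Real.sqrt a ^ 2 + Real.sqrt b ^ 2 ≤ (Real.sqrt a + Real.sqrt b) ^ 2 := by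
    nlinarith [Real.sqrt_nonneg a, Real.sqrt_nonneg b]
  calc Real.sqrt (Real.sqrt a ^ 2 + Real.sqrt b ^ 2)
      ≤ Real.sqrt ((Real.sqrt a + Real.sqrt b) ^ 2) := Real.sqrt_le_sqrt h
    _ = |Real.sqrt a + Real.sqrt b| := Real.sqrt_sq_eq_abs _
    _ = _ := abs_of_nonneg (by positivity)
variable {f : Pt → ℝ}

lemma slice_x' (hf : ContDiff ℝ (⊤ : ℕ∞) f) (y z t : ℝ) :
    HasDerivAt (fun s => f (s, y, z)) (fderiv ℝ f (t, y, z) (1, 0, 0)) t := by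
  have h1 : HasDerivAt (fun s : ℝ => ((s, y, z) : Pt)) ((1 : ℝ), (0 : ℝ), (0 : ℝ)) t :=
    (hasDerivAt_id t).prodMk ((hasDerivAt_const t y).prodMk (hasDerivAt_const t z))
  exact ((hf.differentiable (by simp)) (t, y, z)).hasFDerivAt.comp_hasDerivAt t h1

lemma pdx_eq (hf : ContDiff ℝ (⊤ : ℕ∞) f) : pdx f = fun p => fderiv ℝ f p (1, 0, 0) := by
  funext p
  exact (slice_x' hf p.2.1 p.2.2 p.1).deriv

lemma slice_x (hf : ContDiff ℝ (⊤ : ℕ∞) f) (y z t : ℝ) :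
    HasDerivAt (fun s => f (s, y, z)) (pdx f (t, y, z)) t := by
  rw [pdx_eq hf]; exact slice_x' hf y z t

lemma pdx_cont (hf : ContDiff ℝ (⊤ : ℕ∞) f) : Continuous (pdx f) := by
  rw [pdx_eq hf]
  exact (hf.continuous_fderiv (by simp)).clm_apply continuous_const

lemma slice_y' (hf : ContDiff ℝ (⊤ : ℕ∞) f) (x z t : ℝ) :
    HasDerivAt (fun s => f (x, s, z)) (fderiv ℝ f (x, t, z) (0, 1, 0)) t := by
  have h1 : HasDerivAt (fun s : ℝ => ((x, s, z) : Pt)) ((0 : ℝ), (1 : ℝ), (0 : ℝ)) t :=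
    (hasDerivAt_const t x).prodMk ((hasDerivAt_id t).prodMk (hasDerivAt_const t z))
  exact ((hf.differentiable (by simp)) (x, t, z)).hasFDerivAt.comp_hasDerivAt t h1

lemma pdy_eq (hf : ContDiff ℝ (⊤ : ℕ∞) f) : pdy f = fun p => fderiv ℝ f p (0, 1, 0) := by
  funext p
  exact (slice_y' hf p.1 p.2.2 p.2.1).deriv

lemma slice_y (hf : ContDiff ℝ (⊤ : ℕ∞) f) (x z t : ℝ) :
    HasDerivAt (fun s => f (x, s, z)) (pdy f (x, t, z)) t := by
  rw [pdy_eq hf]; exact slice_y' hf x z t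

lemma pdy_cont (hf : ContDiff ℝ (⊤ : ℕ∞) f) : Continuous (pdy f) := by
  rw [pdy_eq hf]
  exact (hf.continuous_fderiv (by simp)).clm_apply continuous_const

lemma slice_x_sq (hf : ContDiff ℝ (⊤ : ℕ∞) f) (y z t : ℝ) :
    HasDerivAt (fun s => f (s, y, z) ^ 2) (2 * f (t, y, z) * pdx f (t, y, z)) t := by
  have := (slice_x hf y z t).fun_pow 2
  simpa [mul_comm, mul_assoc, mul_left_comm] using this

lemma slice_y_sq (hf : ContDiff ℝ (⊤ : ℕ∞) f) (x z t : ℝ) :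
    HasDerivAt (fun s => f (x, s, z) ^ 2) (2 * f (x, t, z) * pdy f (x, t, z)) t := by
  have := (slice_y hf x z t).fun_pow 2
  simpa [mul_comm, mul_assoc, mul_left_comm] using this
lemma oneD {v dv : ℝ → ℝ} (hd : ∀ t, HasDerivAt v (dv t) t) (hdc : Continuous dv)
    {L : ℝ} (hL : 0 < L) {x : ℝ} (hx : x ∈ Icc 0 L) :
    v x ≤ (1 / L) * (∫ t in (0:ℝ)..L, v t) + ∫ t in (0:ℝ)..L, |dv t| := by
  have hvd : Differentiable ℝ v := fun t => (hd t).differentiableAt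
  have hvc : Continuous v := hvd.continuous
  set D := ∫ t in (0:ℝ)..L, |dv t| with hD
  have key : ∀ s ∈ Icc (0:ℝ) L, v x ≤ v s + D := by
    intro s hs
    have ftc : ∫ t in s..x, dv t = v x - v s :=
      integral_eq_sub_of_hasDerivAt (fun t _ => hd t) (hdc.intervalIntegrable _ _)
    have habs : |∫ t in s..x, dv t| ≤ D := by
      have hmono : ∀ a b : ℝ, a ∈ Icc (0:ℝ) L → b ∈ Icc (0:ℝ) L → a ≤ b →
          (∫ t in a..b, |dv t|) ≤ D := by
        intro a b ha hb hab
        exact integral_mono_interval ha.1 hab hb.2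
          (Filter.Eventually.of_forall fun t => abs_nonneg _)
          ((hdc.abs).intervalIntegrable _ _)
      rcases le_total s x with h | h
      · calc |∫ t in s..x, dv t| ≤ ∫ t in s..x, |dv t| := abs_integral_le_integral_abs h
          _ ≤ D := hmono s x hs hx h
      · rw [integral_symm, abs_neg]
        calc |∫ t in x..s, dv t| ≤ ∫ t in x..s, |dv t| := abs_integral_le_integral_abs h
          _ ≤ D := hmono x s hx hs h
    have := le_abs_self (∫ t in s..x, dv t)
    linarith [ftc ▸ this, habs]
  have mono : (∫ s in (0:ℝ)..L, v x) ≤ ∫ s in (0:ℝ)..L, (v s + D) :=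
    integral_mono_on hL.le intervalIntegrable_const
      ((hvc.intervalIntegrable _ _).add intervalIntegrable_const) key
  rw [intervalIntegral.integral_const,
    integral_add (hvc.intervalIntegrable _ _) intervalIntegrable_const,
    intervalIntegral.integral_const] at mono
  simp only [smul_eq_mul, sub_zero] at mono
  have h1 : L * v x ≤ (∫ t in (0:ℝ)..L, v t) + L * D := by linarith
  have hinv : (1 / L) * L = 1 := by field_simp
  have h2 := mul_le_mul_of_nonneg_left h1 (le_of_lt (one_div_pos.mpr hL))
  rw [← mul_assoc, hinv, one_mul, mul_add, ← mul_assoc, hinv, one_mul] at h2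
  linarith [h2]
lemma int1 {F : ℝ → ℝ} (hF : Continuous F) {a b : ℝ} : IntegrableOn F (Ioo a b) := by
  exact ((hF.continuousOn).integrableOn_compact isCompact_Icc).mono_set Ioo_subset_Icc_self

lemma int2 {F : ℝ × ℝ → ℝ} (hF : Continuous F) {a b c d : ℝ} :
    IntegrableOn F (Ioo a b ×ˢ Ioo c d) := by
  exact ((hF.continuousOn).integrableOn_compact (isCompact_Icc.prod isCompact_Icc)).mono_set
    (prod_mono Ioo_subset_Icc_self Ioo_subset_Icc_self)

lemma int3 {G : Pt → ℝ} (hG : Continuous G) {a b c d e k : ℝ} :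
    IntegrableOn G (Ioo a b ×ˢ (Ioo c d ×ˢ Ioo e k)) := by
  exact ((hG.continuousOn).integrableOn_compact
    (isCompact_Icc.prod (isCompact_Icc.prod isCompact_Icc))).mono_set
    (prod_mono Ioo_subset_Icc_self (prod_mono Ioo_subset_Icc_self Ioo_subset_Icc_self))

lemma ioo_int {F : ℝ → ℝ} {a b : ℝ} (h : a ≤ b) :
    ∫ t in Ioo a b, F t = ∫ t in a..b, F t := by
  rw [intervalIntegral.integral_of_le h, integral_Ioc_eq_integral_Ioo]

lemma intOn_eq {L1 L2 : ℝ} (h1 : 0 < L1) (h2 : 0 < L2) {G : Pt → ℝ} (hG : Continuous G) :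
    intOn L1 L2 G = ∫ x in (0:ℝ)..L1, ∫ y in (0:ℝ)..L2, ∫ z in (-1:ℝ)..1, G (x, y, z) := by
  have hint : IntegrableOn G (Ioo 0 L1 ×ˢ (Ioo 0 L2 ×ˢ Ioo (-1:ℝ) 1)) (volume.prod volume) := by
    rw [← Measure.volume_eq_prod]; exact int3 hG
  rw [intOn, OmegaSet, Measure.volume_eq_prod, setIntegral_prod _ hint, ← ioo_int h1.le]
  refine setIntegral_congr_fun measurableSet_Ioo fun x _ => ?_
  have hintx : IntegrableOn (fun q : ℝ × ℝ => G (x, q)) (Ioo 0 L2 ×ˢ Ioo (-1:ℝ) 1)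
      (volume.prod volume) := by
    rw [← Measure.volume_eq_prod]
    exact int2 (hG.comp (by fun_prop))
  rw [Measure.volume_eq_prod, setIntegral_prod _ hintx, ← ioo_int h2.le]
  refine setIntegral_congr_fun measurableSet_Ioo fun y _ => ?_
  rw [← ioo_int (by norm_num : (-1:ℝ) ≤ 1)]

lemma M_eq {L1 L2 : ℝ} (h1 : 0 < L1) (h2 : 0 < L2) {F : ℝ × ℝ → ℝ} (hF : Continuous F) :
    ∫ q in MSet L1 L2, F q = ∫ x in (0:ℝ)..L1, ∫ y in (0:ℝ)..L2, F (x, y) := by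
  have hint : IntegrableOn F (Ioo 0 L1 ×ˢ Ioo 0 L2) (volume.prod volume) := by
    rw [← Measure.volume_eq_prod]; exact int2 hF
  rw [MSet, Measure.volume_eq_prod, setIntegral_prod _ hint, ← ioo_int h1.le]
  refine setIntegral_congr_fun measurableSet_Ioo fun x _ => ?_
  rw [← ioo_int h2.le]

/-- swap two interval integrals of a continuous function -/
lemma swap12 {F : ℝ → ℝ → ℝ} (hF : Continuous fun p : ℝ × ℝ => F p.1 p.2)
    {a b c d : ℝ} (hab : a ≤ b) (hcd : c ≤ d) :
    ∫ x in a..b, ∫ y in c..d, F x y = ∫ y in c..d, ∫ x in a..b, F x y := by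
  have hint : Integrable (Function.uncurry F)
      ((volume.restrict (Ioo a b)).prod (volume.restrict (Ioo c d))) := by
    rw [Measure.prod_restrict, ← Measure.volume_eq_prod]
    exact int2 hF
  have h := MeasureTheory.integral_integral_swap hint
  calc ∫ x in a..b, ∫ y in c..d, F x y
      = ∫ x in Ioo a b, ∫ y in Ioo c d, F x y := by
        rw [← ioo_int hab]
        refine setIntegral_congr_fun measurableSet_Ioo fun x _ => ?_
        rw [← ioo_int hcd]
    _ = ∫ y in Ioo c d, ∫ x in Ioo a b, F x y := h
    _ = ∫ y in c..d, ∫ x in a..b, F x y := by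
        rw [← ioo_int hcd]
        refine setIntegral_congr_fun measurableSet_Ioo fun y _ => ?_
        rw [← ioo_int hab]

open intervalIntegral in
lemma core {L1 L2 : ℝ} (hL1 : 0 < L1) (hL2 : 0 < L2) {g : Pt → ℝ} (hg : ContDiff ℝ (⊤ : ℕ∞) g) :
    (∫ q in MSet L1 L2, (∫ z in (-1:ℝ)..1, g (q.1, q.2, z) ^ 2) ^ 2)
      ≤ ((1 / L1) * intOn L1 L2 (fun p => g p ^ 2)
            + 2 * intOn L1 L2 (fun p => |g p * pdx g p|))
        * ((1 / L2) * intOn L1 L2 (fun p => g p ^ 2)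
            + 2 * intOn L1 L2 (fun p => |g p * pdy g p|)) := by
  have hgc : Continuous g := hg.continuous
  have hpx : Continuous (pdx g) := pdx_cont hg
  have hpy : Continuous (pdy g) := pdy_cont hg
  -- basic continuous integrands
  have hg2 : Continuous (fun p : Pt => g p ^ 2) := by fun_prop
  have hax : Continuous (fun p : Pt => 2 * |g p * pdx g p|) := by fun_prop
  have hay : Continuous (fun p : Pt => 2 * |g p * pdy g p|) := by fun_prop
  -- `u q = ∫ z, g (q, z) ^ 2`
  set u : ℝ × ℝ → ℝ := fun q => ∫ z in (-1:ℝ)..1, g (q.1, q.2, z) ^ 2 with hu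
  have hucont : Continuous u := by
    apply continuous_parametric_intervalIntegral_of_continuous'
    fun_prop
  have hu0 : ∀ q, 0 ≤ u q := fun q => intervalIntegral.integral_nonneg (by norm_num)
    (fun z _ => sq_nonneg _)
  -- the two marginal majorants
  set A : ℝ → ℝ := fun y => (1 / L1) * (∫ x in (0:ℝ)..L1, ∫ z in (-1:ℝ)..1, g (x, y, z) ^ 2)
      + ∫ x in (0:ℝ)..L1, ∫ z in (-1:ℝ)..1, 2 * |g (x, y, z) * pdx g (x, y, z)| with hA
  set B : ℝ → ℝ := fun x => (1 / L2) * (∫ y in (0:ℝ)..L2, ∫ z in (-1:ℝ)..1, g (x, y, z) ^ 2)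
      + ∫ y in (0:ℝ)..L2, ∫ z in (-1:ℝ)..1, 2 * |g (x, y, z) * pdy g (x, y, z)| with hB
  have hAcont : Continuous A := by
    apply Continuous.add
    · apply continuous_const.mul
      apply continuous_parametric_intervalIntegral_of_continuous' (μ := volume)
        (f := fun (y : ℝ) (x : ℝ) => ∫ z in (-1:ℝ)..1, g (x, y, z) ^ 2)
      apply continuous_parametric_intervalIntegral_of_continuous' (μ := volume)
        (f := fun (p : ℝ × ℝ) (z : ℝ) => g (p.2, p.1, z) ^ 2)
      fun_prop
    · apply continuous_parametric_intervalIntegral_of_continuous' (μ := volume)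
        (f := fun (y : ℝ) (x : ℝ) => ∫ z in (-1:ℝ)..1, 2 * |g (x, y, z) * pdx g (x, y, z)|)
      apply continuous_parametric_intervalIntegral_of_continuous' (μ := volume)
        (f := fun (p : ℝ × ℝ) (z : ℝ) => 2 * |g (p.2, p.1, z) * pdx g (p.2, p.1, z)|)
      fun_prop
  have hBcont : Continuous B := by
    apply Continuous.add
    · apply continuous_const.mul
      apply continuous_parametric_intervalIntegral_of_continuous' (μ := volume)
        (f := fun (x : ℝ) (y : ℝ) => ∫ z in (-1:ℝ)..1, g (x, y, z) ^ 2)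
      apply continuous_parametric_intervalIntegral_of_continuous' (μ := volume)
        (f := fun (p : ℝ × ℝ) (z : ℝ) => g (p.1, p.2, z) ^ 2)
      fun_prop
    · apply continuous_parametric_intervalIntegral_of_continuous' (μ := volume)
        (f := fun (x : ℝ) (y : ℝ) => ∫ z in (-1:ℝ)..1, 2 * |g (x, y, z) * pdy g (x, y, z)|)
      apply continuous_parametric_intervalIntegral_of_continuous' (μ := volume)
        (f := fun (p : ℝ × ℝ) (z : ℝ) => 2 * |g (p.1, p.2, z) * pdy g (p.1, p.2, z)|)
      fun_prop
  -- pointwise bound `u (x, y) ≤ A y`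
  have hAy : ∀ y : ℝ, ∀ x ∈ Icc (0:ℝ) L1, u (x, y) ≤ A y := by
    intro y x hx
    have ptz : ∀ z : ℝ, g (x, y, z) ^ 2
        ≤ (1 / L1) * (∫ t in (0:ℝ)..L1, g (t, y, z) ^ 2)
          + ∫ t in (0:ℝ)..L1, 2 * |g (t, y, z) * pdx g (t, y, z)| := by
      intro z
      have h1 := oneD (v := fun t => g (t, y, z) ^ 2)
        (dv := fun t => 2 * g (t, y, z) * pdx g (t, y, z))
        (fun t => slice_x_sq hg y z t) (by fun_prop) hL1 hx
      have h2 : (∫ t in (0:ℝ)..L1, |2 * g (t, y, z) * pdx g (t, y, z)|)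
          = ∫ t in (0:ℝ)..L1, 2 * |g (t, y, z) * pdx g (t, y, z)| := by
        refine intervalIntegral.integral_congr fun t _ => ?_
        rw [mul_assoc, abs_mul, abs_two]
      rw [h2] at h1
      exact h1
    have hle : u (x, y) ≤ ∫ z in (-1:ℝ)..1,
        ((1 / L1) * (∫ t in (0:ℝ)..L1, g (t, y, z) ^ 2)
          + ∫ t in (0:ℝ)..L1, 2 * |g (t, y, z) * pdx g (t, y, z)|) := by
      apply intervalIntegral.integral_mono_on (by norm_num)
      · exact Continuous.intervalIntegrable (by fun_prop) _ _
      · apply Continuous.intervalIntegrable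
        apply Continuous.add
        · apply continuous_const.mul
          apply continuous_parametric_intervalIntegral_of_continuous' (μ := volume)
            (f := fun (z : ℝ) (t : ℝ) => g (t, y, z) ^ 2)
          fun_prop
        · apply continuous_parametric_intervalIntegral_of_continuous' (μ := volume)
            (f := fun (z : ℝ) (t : ℝ) => 2 * |g (t, y, z) * pdx g (t, y, z)|)
          fun_prop
      · exact fun z _ => ptz z
    have hsplit : (∫ z in (-1:ℝ)..1,
        ((1 / L1) * (∫ t in (0:ℝ)..L1, g (t, y, z) ^ 2)
          + ∫ t in (0:ℝ)..L1, 2 * |g (t, y, z) * pdx g (t, y, z)|))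
        = (1 / L1) * (∫ z in (-1:ℝ)..1, ∫ t in (0:ℝ)..L1, g (t, y, z) ^ 2)
          + ∫ z in (-1:ℝ)..1, ∫ t in (0:ℝ)..L1, 2 * |g (t, y, z) * pdx g (t, y, z)| := by
      rw [intervalIntegral.integral_add, intervalIntegral.integral_const_mul]
      · apply Continuous.intervalIntegrable
        apply continuous_const.mul
        apply continuous_parametric_intervalIntegral_of_continuous' (μ := volume)
          (f := fun (z : ℝ) (t : ℝ) => g (t, y, z) ^ 2)
        fun_prop
      · apply Continuous.intervalIntegrable
        apply continuous_parametric_intervalIntegral_of_continuous' (μ := volume)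
          (f := fun (z : ℝ) (t : ℝ) => 2 * |g (t, y, z) * pdx g (t, y, z)|)
        fun_prop
    have hswap1 : (∫ z in (-1:ℝ)..1, ∫ t in (0:ℝ)..L1, g (t, y, z) ^ 2)
        = ∫ t in (0:ℝ)..L1, ∫ z in (-1:ℝ)..1, g (t, y, z) ^ 2 :=
      swap12 (F := fun z t => g (t, y, z) ^ 2) (by fun_prop) (by norm_num) hL1.le
    have hswap2 : (∫ z in (-1:ℝ)..1, ∫ t in (0:ℝ)..L1, 2 * |g (t, y, z) * pdx g (t, y, z)|)
        = ∫ t in (0:ℝ)..L1, ∫ z in (-1:ℝ)..1, 2 * |g (t, y, z) * pdx g (t, y, z)| :=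
      swap12 (F := fun z t => 2 * |g (t, y, z) * pdx g (t, y, z)|) (by fun_prop)
        (by norm_num) hL1.le
    calc u (x, y) ≤ _ := hle
      _ = _ := hsplit
      _ = A y := by rw [hswap1, hswap2]
  -- pointwise bound `u (x, y) ≤ B x`
  have hBx : ∀ x : ℝ, ∀ y ∈ Icc (0:ℝ) L2, u (x, y) ≤ B x := by
    intro x y hy
    have ptz : ∀ z : ℝ, g (x, y, z) ^ 2
        ≤ (1 / L2) * (∫ t in (0:ℝ)..L2, g (x, t, z) ^ 2)
          + ∫ t in (0:ℝ)..L2, 2 * |g (x, t, z) * pdy g (x, t, z)| := by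
      intro z
      have h1 := oneD (v := fun t => g (x, t, z) ^ 2)
        (dv := fun t => 2 * g (x, t, z) * pdy g (x, t, z))
        (fun t => slice_y_sq hg x z t) (by fun_prop) hL2 hy
      have h2 : (∫ t in (0:ℝ)..L2, |2 * g (x, t, z) * pdy g (x, t, z)|)
          = ∫ t in (0:ℝ)..L2, 2 * |g (x, t, z) * pdy g (x, t, z)| := by
        refine intervalIntegral.integral_congr fun t _ => ?_
        rw [mul_assoc, abs_mul, abs_two]
      rw [h2] at h1
      exact h1
    have hle : u (x, y) ≤ ∫ z in (-1:ℝ)..1,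
        ((1 / L2) * (∫ t in (0:ℝ)..L2, g (x, t, z) ^ 2)
          + ∫ t in (0:ℝ)..L2, 2 * |g (x, t, z) * pdy g (x, t, z)|) := by
      apply intervalIntegral.integral_mono_on (by norm_num)
      · exact Continuous.intervalIntegrable (by fun_prop) _ _
      · apply Continuous.intervalIntegrable
        apply Continuous.add
        · apply continuous_const.mul
          apply continuous_parametric_intervalIntegral_of_continuous' (μ := volume)
            (f := fun (z : ℝ) (t : ℝ) => g (x, t, z) ^ 2)
          fun_prop
        · apply continuous_parametric_intervalIntegral_of_continuous' (μ := volume)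
            (f := fun (z : ℝ) (t : ℝ) => 2 * |g (x, t, z) * pdy g (x, t, z)|)
          fun_prop
      · exact fun z _ => ptz z
    have hsplit : (∫ z in (-1:ℝ)..1,
        ((1 / L2) * (∫ t in (0:ℝ)..L2, g (x, t, z) ^ 2)
          + ∫ t in (0:ℝ)..L2, 2 * |g (x, t, z) * pdy g (x, t, z)|))
        = (1 / L2) * (∫ z in (-1:ℝ)..1, ∫ t in (0:ℝ)..L2, g (x, t, z) ^ 2)
          + ∫ z in (-1:ℝ)..1, ∫ t in (0:ℝ)..L2, 2 * |g (x, t, z) * pdy g (x, t, z)| := by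
      rw [intervalIntegral.integral_add, intervalIntegral.integral_const_mul]
      · apply Continuous.intervalIntegrable
        apply continuous_const.mul
        apply continuous_parametric_intervalIntegral_of_continuous' (μ := volume)
          (f := fun (z : ℝ) (t : ℝ) => g (x, t, z) ^ 2)
        fun_prop
      · apply Continuous.intervalIntegrable
        apply continuous_parametric_intervalIntegral_of_continuous' (μ := volume)
          (f := fun (z : ℝ) (t : ℝ) => 2 * |g (x, t, z) * pdy g (x, t, z)|)
        fun_prop
    have hswap1 : (∫ z in (-1:ℝ)..1, ∫ t in (0:ℝ)..L2, g (x, t, z) ^ 2)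
        = ∫ t in (0:ℝ)..L2, ∫ z in (-1:ℝ)..1, g (x, t, z) ^ 2 :=
      swap12 (F := fun z t => g (x, t, z) ^ 2) (by fun_prop) (by norm_num) hL2.le
    have hswap2 : (∫ z in (-1:ℝ)..1, ∫ t in (0:ℝ)..L2, 2 * |g (x, t, z) * pdy g (x, t, z)|)
        = ∫ t in (0:ℝ)..L2, ∫ z in (-1:ℝ)..1, 2 * |g (x, t, z) * pdy g (x, t, z)| :=
      swap12 (F := fun z t => 2 * |g (x, t, z) * pdy g (x, t, z)|) (by fun_prop)
        (by norm_num) hL2.le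
    calc u (x, y) ≤ _ := hle
      _ = _ := hsplit
      _ = B x := by rw [hswap1, hswap2]
  -- integrate the product bound
  have step1 : (∫ q in MSet L1 L2, u q ^ 2) ≤ ∫ q in MSet L1 L2, A q.2 * B q.1 := by
    apply setIntegral_mono_on
    · exact int2 (by fun_prop)
    · exact int2 (by fun_prop)
    · exact measurableSet_Ioo.prod measurableSet_Ioo
    · rintro ⟨x, y⟩ ⟨hx, hy⟩
      have h1 := hAy y x (Ioo_subset_Icc_self hx)
      have h2 := hBx x y (Ioo_subset_Icc_self hy)
      have h0 := hu0 (x, y)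
      have hA0 : (0:ℝ) ≤ A y := le_trans h0 h1
      calc u (x, y) ^ 2 = u (x, y) * u (x, y) := sq (u (x, y)) ▸ rfl
        _ ≤ A y * B x := mul_le_mul h1 h2 h0 hA0
  have step2 : (∫ q in MSet L1 L2, A q.2 * B q.1)
      = (∫ y in (0:ℝ)..L2, A y) * ∫ x in (0:ℝ)..L1, B x := by
    rw [M_eq hL1 hL2 (by fun_prop : Continuous fun q : ℝ × ℝ => A q.2 * B q.1)]
    have : ∀ x : ℝ, (∫ y in (0:ℝ)..L2, A y * B x) = (∫ y in (0:ℝ)..L2, A y) * B x := by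
      intro x
      rw [intervalIntegral.integral_mul_const]
    rw [intervalIntegral.integral_congr (fun x _ => this x)]
    rw [intervalIntegral.integral_const_mul]
  have stepA : (∫ y in (0:ℝ)..L2, A y)
      = (1 / L1) * intOn L1 L2 (fun p => g p ^ 2)
        + 2 * intOn L1 L2 (fun p => |g p * pdx g p|) := by
    have hP : Continuous fun y : ℝ => ∫ x in (0:ℝ)..L1, ∫ z in (-1:ℝ)..1, g (x, y, z) ^ 2 := by
      apply continuous_parametric_intervalIntegral_of_continuous' (μ := volume)
        (f := fun (y : ℝ) (x : ℝ) => ∫ z in (-1:ℝ)..1, g (x, y, z) ^ 2)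
      apply continuous_parametric_intervalIntegral_of_continuous' (μ := volume)
        (f := fun (p : ℝ × ℝ) (z : ℝ) => g (p.2, p.1, z) ^ 2)
      fun_prop
    have hQ : Continuous fun y : ℝ =>
        ∫ x in (0:ℝ)..L1, ∫ z in (-1:ℝ)..1, 2 * |g (x, y, z) * pdx g (x, y, z)| := by
      apply continuous_parametric_intervalIntegral_of_continuous' (μ := volume)
        (f := fun (y : ℝ) (x : ℝ) => ∫ z in (-1:ℝ)..1, 2 * |g (x, y, z) * pdx g (x, y, z)|)
      apply continuous_parametric_intervalIntegral_of_continuous' (μ := volume)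
        (f := fun (p : ℝ × ℝ) (z : ℝ) => 2 * |g (p.2, p.1, z) * pdx g (p.2, p.1, z)|)
      fun_prop
    rw [hA]
    rw [intervalIntegral.integral_add ((continuous_const.fun_mul hP).intervalIntegrable _ _)
      (hQ.intervalIntegrable _ _), intervalIntegral.integral_const_mul]
    have e1 : (∫ y in (0:ℝ)..L2, ∫ x in (0:ℝ)..L1, ∫ z in (-1:ℝ)..1, g (x, y, z) ^ 2)
        = intOn L1 L2 (fun p => g p ^ 2) := by
      rw [swap12 (F := fun y x => ∫ z in (-1:ℝ)..1, g (x, y, z) ^ 2) ?_ hL2.le hL1.le]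
      · exact (intOn_eq hL1 hL2 hg2).symm
      · apply continuous_parametric_intervalIntegral_of_continuous' (μ := volume)
          (f := fun (p : ℝ × ℝ) (z : ℝ) => g (p.2, p.1, z) ^ 2)
        fun_prop
    have e2 : (∫ y in (0:ℝ)..L2, ∫ x in (0:ℝ)..L1, ∫ z in (-1:ℝ)..1,
          2 * |g (x, y, z) * pdx g (x, y, z)|)
        = intOn L1 L2 (fun p => 2 * |g p * pdx g p|) := by
      rw [swap12 (F := fun y x => ∫ z in (-1:ℝ)..1, 2 * |g (x, y, z) * pdx g (x, y, z)|)
        ?_ hL2.le hL1.le]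
      · exact (intOn_eq hL1 hL2 hax).symm
      · apply continuous_parametric_intervalIntegral_of_continuous' (μ := volume)
          (f := fun (p : ℝ × ℝ) (z : ℝ) => 2 * |g (p.2, p.1, z) * pdx g (p.2, p.1, z)|)
        fun_prop
    have e3 : intOn L1 L2 (fun p => 2 * |g p * pdx g p|)
        = 2 * intOn L1 L2 (fun p => |g p * pdx g p|) := by
      rw [intOn, intOn]
      exact integral_const_mul _ _
    rw [e1, e2, e3]
  have stepB : (∫ x in (0:ℝ)..L1, B x)
      = (1 / L2) * intOn L1 L2 (fun p => g p ^ 2)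
        + 2 * intOn L1 L2 (fun p => |g p * pdy g p|) := by
    have hP : Continuous fun x : ℝ => ∫ y in (0:ℝ)..L2, ∫ z in (-1:ℝ)..1, g (x, y, z) ^ 2 := by
      apply continuous_parametric_intervalIntegral_of_continuous' (μ := volume)
        (f := fun (x : ℝ) (y : ℝ) => ∫ z in (-1:ℝ)..1, g (x, y, z) ^ 2)
      apply continuous_parametric_intervalIntegral_of_continuous' (μ := volume)
        (f := fun (p : ℝ × ℝ) (z : ℝ) => g (p.1, p.2, z) ^ 2)
      fun_prop
    have hQ : Continuous fun x : ℝ =>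
        ∫ y in (0:ℝ)..L2, ∫ z in (-1:ℝ)..1, 2 * |g (x, y, z) * pdy g (x, y, z)| := by
      apply continuous_parametric_intervalIntegral_of_continuous' (μ := volume)
        (f := fun (x : ℝ) (y : ℝ) => ∫ z in (-1:ℝ)..1, 2 * |g (x, y, z) * pdy g (x, y, z)|)
      apply continuous_parametric_intervalIntegral_of_continuous' (μ := volume)
        (f := fun (p : ℝ × ℝ) (z : ℝ) => 2 * |g (p.1, p.2, z) * pdy g (p.1, p.2, z)|)
      fun_prop
    rw [hB]
    rw [intervalIntegral.integral_add ((continuous_const.fun_mul hP).intervalIntegrable _ _)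
      (hQ.intervalIntegrable _ _), intervalIntegral.integral_const_mul]
    have e1 : (∫ x in (0:ℝ)..L1, ∫ y in (0:ℝ)..L2, ∫ z in (-1:ℝ)..1, g (x, y, z) ^ 2)
        = intOn L1 L2 (fun p => g p ^ 2) := (intOn_eq hL1 hL2 hg2).symm
    have e2 : (∫ x in (0:ℝ)..L1, ∫ y in (0:ℝ)..L2, ∫ z in (-1:ℝ)..1,
          2 * |g (x, y, z) * pdy g (x, y, z)|)
        = intOn L1 L2 (fun p => 2 * |g p * pdy g p|) := (intOn_eq hL1 hL2 hay).symm
    have e3 : intOn L1 L2 (fun p => 2 * |g p * pdy g p|)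
        = 2 * intOn L1 L2 (fun p => |g p * pdy g p|) := by
      rw [intOn, intOn]
      exact integral_const_mul _ _
    rw [e1, e2, e3]
  calc (∫ q in MSet L1 L2, (∫ z in (-1:ℝ)..1, g (q.1, q.2, z) ^ 2) ^ 2)
      = ∫ q in MSet L1 L2, u q ^ 2 := rfl
    _ ≤ ∫ q in MSet L1 L2, A q.2 * B q.1 := step1
    _ = (∫ y in (0:ℝ)..L2, A y) * ∫ x in (0:ℝ)..L1, B x := step2
    _ = _ := by rw [stepA, stepB]

lemma cs_int {F G : ℝ → ℝ} (hF : Continuous F) (hG : Continuous G) {a b : ℝ} (hab : a ≤ b) :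
    (∫ z in a..b, F z * G z) ^ 2 ≤ (∫ z in a..b, F z ^ 2) * (∫ z in a..b, G z ^ 2) := by
  rw [intervalIntegral.integral_of_le hab, intervalIntegral.integral_of_le hab,
    intervalIntegral.integral_of_le hab]
  refine cs_sq (volume.restrict (Ioc a b)) ?_ ?_ ?_
  · exact (((hF.pow 2).continuousOn).integrableOn_compact isCompact_Icc).mono_set
      Ioc_subset_Icc_self
  · exact (((hG.pow 2).continuousOn).integrableOn_compact isCompact_Icc).mono_set
      Ioc_subset_Icc_self
  · exact (((hF.mul hG).continuousOn).integrableOn_compact isCompact_Icc).mono_set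
      Ioc_subset_Icc_self

lemma intOn_eq_M {L1 L2 : ℝ} (h1 : 0 < L1) (h2 : 0 < L2) {G : Pt → ℝ} (hG : Continuous G) :
    (∫ q in MSet L1 L2, ∫ z in (-1:ℝ)..1, G (q.1, q.2, z)) = intOn L1 L2 G := by
  rw [M_eq h1 h2, intOn_eq h1 h2 hG]
  apply continuous_parametric_intervalIntegral_of_continuous' (μ := volume)
    (f := fun (q : ℝ × ℝ) (z : ℝ) => G (q.1, q.2, z))
  fun_prop

lemma intOn_nonneg {L1 L2 : ℝ} {G : Pt → ℝ} (hG : ∀ p, 0 ≤ G p) : 0 ≤ intOn L1 L2 G :=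
  setIntegral_nonneg (measurableSet_Ioo.prod (measurableSet_Ioo.prod measurableSet_Ioo))
    fun p _ => hG p

/-- Cauchy–Schwarz over `Ω` for `|g ∂g|`. -/
lemma omega_cs {L1 L2 : ℝ} {g dg : Pt → ℝ} (hg : Continuous g) (hdg : Continuous dg) :
    intOn L1 L2 (fun p => |g p * dg p|)
      ≤ Real.sqrt (intOn L1 L2 (fun p => g p ^ 2))
        * Real.sqrt (intOn L1 L2 (fun p => dg p ^ 2)) := by
  have key := cs (volume.restrict (OmegaSet L1 L2)) (f := fun p => |g p|) (g := fun p => |dg p|)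
    ?_ ?_ ?_
  · have e1 : ∀ p : Pt, |g p| * |dg p| = |g p * dg p| := fun p => (abs_mul _ _).symm
    have e2 : ∀ p : Pt, |g p| ^ 2 = g p ^ 2 := fun p => sq_abs _
    have e3 : ∀ p : Pt, |dg p| ^ 2 = dg p ^ 2 := fun p => sq_abs _
    simp only [e1, e2, e3] at key
    exact key
  · exact int3 (by fun_prop)
  · exact int3 (by fun_prop)
  · exact int3 (by fun_prop)


/-- Cao–Titi anisotropic Ladyzhenskaya-type inequality, second form. -/
theorem stmt_1 (L1 L2 : ℝ) (hL1 : 0 < L1) (hL2 : 0 < L2) :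
    ∃ C > 0, ∀ f g h : Pt → ℝ,
      ContDiff ℝ (⊤ : ℕ∞) f → ContDiff ℝ (⊤ : ℕ∞) g → ContDiff ℝ (⊤ : ℕ∞) h →
      Periodic3 L1 L2 f → Periodic3 L1 L2 g → Periodic3 L1 L2 h →
      (∫ q in MSet L1 L2,
          (∫ z in (-1:ℝ)..1, f (q.1, q.2, z)) *
          (∫ z in (-1:ℝ)..1, g (q.1, q.2, z) * h (q.1, q.2, z)))
        ≤ C * L2n L1 L2 f
            * Real.sqrt (L2n L1 L2 g)
            * (Real.sqrt (L2n L1 L2 g) + Real.sqrt (L2gradH L1 L2 g))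
            * Real.sqrt (L2n L1 L2 h)
            * (Real.sqrt (L2n L1 L2 h) + Real.sqrt (L2gradH L1 L2 h)) := by
  set K : ℝ := 1 / L1 + 1 / L2 + 2 with hKdef
  have hK : 0 < K := by positivity
  refine ⟨Real.sqrt 2 * K, by positivity, ?_⟩
  intro f g h hf hg hh _ _ _
  have hfc : Continuous f := hf.continuous
  have hgc : Continuous g := hg.continuous
  have hhc : Continuous h := hh.continuous
  have hpxg : Continuous (pdx g) := pdx_cont hg
  have hpyg : Continuous (pdy g) := pdy_cont hg
  have hpxh : Continuous (pdx h) := pdx_cont hh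
  have hpyh : Continuous (pdy h) := pdy_cont hh
  -- abbreviations
  set Ff : ℝ × ℝ → ℝ := fun q => ∫ z in (-1:ℝ)..1, f (q.1, q.2, z) with hFf
  set W : ℝ × ℝ → ℝ := fun q => ∫ z in (-1:ℝ)..1, g (q.1, q.2, z) * h (q.1, q.2, z) with hW
  set ug : ℝ × ℝ → ℝ := fun q => ∫ z in (-1:ℝ)..1, g (q.1, q.2, z) ^ 2 with hug
  set uh : ℝ × ℝ → ℝ := fun q => ∫ z in (-1:ℝ)..1, h (q.1, q.2, z) ^ 2 with huh
  have hFfc : Continuous Ff := by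
    apply continuous_parametric_intervalIntegral_of_continuous' (μ := volume)
      (f := fun (q : ℝ × ℝ) (z : ℝ) => f (q.1, q.2, z)); fun_prop
  have hWc : Continuous W := by
    apply continuous_parametric_intervalIntegral_of_continuous' (μ := volume)
      (f := fun (q : ℝ × ℝ) (z : ℝ) => g (q.1, q.2, z) * h (q.1, q.2, z)); fun_prop
  have hugc : Continuous ug := by
    apply continuous_parametric_intervalIntegral_of_continuous' (μ := volume)
      (f := fun (q : ℝ × ℝ) (z : ℝ) => g (q.1, q.2, z) ^ 2); fun_prop
  have huhc : Continuous uh := by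
    apply continuous_parametric_intervalIntegral_of_continuous' (μ := volume)
      (f := fun (q : ℝ × ℝ) (z : ℝ) => h (q.1, q.2, z) ^ 2); fun_prop
  set Sf : ℝ := intOn L1 L2 (fun p => f p ^ 2) with hSf
  set Sg : ℝ := intOn L1 L2 (fun p => g p ^ 2) with hSg
  set Sh : ℝ := intOn L1 L2 (fun p => h p ^ 2) with hSh
  have hSf0 : 0 ≤ Sf := intOn_nonneg fun p => sq_nonneg _
  have hSg0 : 0 ≤ Sg := intOn_nonneg fun p => sq_nonneg _
  have hSh0 : 0 ≤ Sh := intOn_nonneg fun p => sq_nonneg _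
  set Nf : ℝ := L2n L1 L2 f with hNf
  set Ng : ℝ := L2n L1 L2 g with hNg
  set Nh : ℝ := L2n L1 L2 h with hNh
  set Dg : ℝ := L2gradH L1 L2 g with hDg
  set Dh : ℝ := L2gradH L1 L2 h with hDh
  have hNf0 : 0 ≤ Nf := Real.sqrt_nonneg _
  have hNg0 : 0 ≤ Ng := Real.sqrt_nonneg _
  have hNh0 : 0 ≤ Nh := Real.sqrt_nonneg _
  have hDg0 : 0 ≤ Dg := Real.sqrt_nonneg _
  have hDh0 : 0 ≤ Dh := Real.sqrt_nonneg _
  have hNgsq : Sg = Ng ^ 2 := (Real.sq_sqrt hSg0).symm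
  have hNhsq : Sh = Nh ^ 2 := (Real.sq_sqrt hSh0).symm
  -- Cauchy–Schwarz bounds on the gradient cross terms
  have crossbound : ∀ (φ : Pt → ℝ) (dφ : Pt → ℝ), ContDiff ℝ (⊤ : ℕ∞) φ → Continuous dφ →
      (∀ p, dφ p ^ 2 ≤ gradHSq φ p) →
      intOn L1 L2 (fun p => |φ p * dφ p|)
        ≤ L2n L1 L2 φ * L2gradH L1 L2 φ := by
    intro φ dφ hφ hdφ hle
    have h1 := omega_cs (L1 := L1) (L2 := L2) hφ.continuous hdφ
    have hgH : Continuous (gradHSq φ) := by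
      have h1 := pdx_cont hφ
      have h2 := pdy_cont hφ
      unfold gradHSq
      fun_prop
    have h2 : intOn L1 L2 (fun p => dφ p ^ 2) ≤ intOn L1 L2 (gradHSq φ) := by
      exact integral_mono (int3 (by fun_prop)) (int3 hgH) hle
    calc intOn L1 L2 (fun p => |φ p * dφ p|)
        ≤ Real.sqrt (intOn L1 L2 (fun p => φ p ^ 2))
          * Real.sqrt (intOn L1 L2 (fun p => dφ p ^ 2)) := h1
      _ ≤ Real.sqrt (intOn L1 L2 (fun p => φ p ^ 2))
          * Real.sqrt (intOn L1 L2 (gradHSq φ)) := by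
          exact mul_le_mul_of_nonneg_left (Real.sqrt_le_sqrt h2) (Real.sqrt_nonneg _)
      _ = L2n L1 L2 φ * L2gradH L1 L2 φ := rfl
  have hXg : intOn L1 L2 (fun p => |g p * pdx g p|) ≤ Ng * Dg :=
    crossbound g (pdx g) hg hpxg fun p => by
      unfold gradHSq; nlinarith [sq_nonneg (pdy g p)]
  have hYg : intOn L1 L2 (fun p => |g p * pdy g p|) ≤ Ng * Dg :=
    crossbound g (pdy g) hg hpyg fun p => by
      unfold gradHSq; nlinarith [sq_nonneg (pdx g p)]
  have hXh : intOn L1 L2 (fun p => |h p * pdx h p|) ≤ Nh * Dh :=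
    crossbound h (pdx h) hh hpxh fun p => by
      unfold gradHSq; nlinarith [sq_nonneg (pdy h p)]
  have hYh : intOn L1 L2 (fun p => |h p * pdy h p|) ≤ Nh * Dh :=
    crossbound h (pdy h) hh hpyh fun p => by
      unfold gradHSq; nlinarith [sq_nonneg (pdx h p)]
  have hXg0 : 0 ≤ intOn L1 L2 (fun p => |g p * pdx g p|) := intOn_nonneg fun p => abs_nonneg _
  have hYg0 : 0 ≤ intOn L1 L2 (fun p => |g p * pdy g p|) := intOn_nonneg fun p => abs_nonneg _
  have hXh0 : 0 ≤ intOn L1 L2 (fun p => |h p * pdx h p|) := intOn_nonneg fun p => abs_nonneg _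
  have hYh0 : 0 ≤ intOn L1 L2 (fun p => |h p * pdy h p|) := intOn_nonneg fun p => abs_nonneg _
  -- step A : Cauchy–Schwarz over M
  have stepA : (∫ q in MSet L1 L2, Ff q * W q)
      ≤ Real.sqrt (∫ q in MSet L1 L2, Ff q ^ 2) * Real.sqrt (∫ q in MSet L1 L2, W q ^ 2) :=
    cs (volume.restrict (MSet L1 L2)) (int2 (by fun_prop)) (int2 (by fun_prop))
      (int2 (by fun_prop))
  -- step B : ∫_M Ff² ≤ 2 Sf
  have stepB : (∫ q in MSet L1 L2, Ff q ^ 2) ≤ 2 * Sf := by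
    have pt : ∀ q : ℝ × ℝ, Ff q ^ 2 ≤ 2 * ∫ z in (-1:ℝ)..1, f (q.1, q.2, z) ^ 2 := by
      intro q
      have hcs := cs_int (F := fun _ : ℝ => (1:ℝ)) (G := fun z => f (q.1, q.2, z))
        continuous_const (by fun_prop) (by norm_num : (-1:ℝ) ≤ 1)
      have e1 : (∫ z in (-1:ℝ)..1, (1:ℝ) * f (q.1, q.2, z)) = Ff q := by
        simp [hFf]
      have e2 : (∫ z in (-1:ℝ)..1, (1:ℝ) ^ 2) = 2 := by
        simp; norm_num
      rw [e1, e2] at hcs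
      linarith [hcs]
    have mono : (∫ q in MSet L1 L2, Ff q ^ 2)
        ≤ ∫ q in MSet L1 L2, 2 * ∫ z in (-1:ℝ)..1, f (q.1, q.2, z) ^ 2 := by
      apply integral_mono (int2 (by fun_prop)) ?_ pt
      have : Continuous fun q : ℝ × ℝ => ∫ z in (-1:ℝ)..1, f (q.1, q.2, z) ^ 2 := by
        apply continuous_parametric_intervalIntegral_of_continuous' (μ := volume)
          (f := fun (q : ℝ × ℝ) (z : ℝ) => f (q.1, q.2, z) ^ 2); fun_prop
      exact int2 (by fun_prop)
    have e3 : (∫ q in MSet L1 L2, 2 * ∫ z in (-1:ℝ)..1, f (q.1, q.2, z) ^ 2) = 2 * Sf := by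
      rw [MeasureTheory.integral_const_mul]
      rw [intOn_eq_M hL1 hL2 (G := fun p => f p ^ 2) (by fun_prop)]
    linarith [mono, e3 ▸ mono, e3]
  -- step C : ∫_M W² ≤ ∫ ug · uh
  have stepC : (∫ q in MSet L1 L2, W q ^ 2) ≤ ∫ q in MSet L1 L2, ug q * uh q := by
    have pt : ∀ q : ℝ × ℝ, W q ^ 2 ≤ ug q * uh q := fun q =>
      cs_int (F := fun z => g (q.1, q.2, z)) (G := fun z => h (q.1, q.2, z))
        (by fun_prop) (by fun_prop) (by norm_num)
    exact integral_mono (int2 (by fun_prop)) (int2 (by fun_prop)) pt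
  -- step D : Cauchy–Schwarz on ug · uh
  have stepD : (∫ q in MSet L1 L2, ug q * uh q)
      ≤ Real.sqrt (∫ q in MSet L1 L2, ug q ^ 2) * Real.sqrt (∫ q in MSet L1 L2, uh q ^ 2) :=
    cs (volume.restrict (MSet L1 L2)) (int2 (by fun_prop)) (int2 (by fun_prop))
      (int2 (by fun_prop))
  -- step E : core bound
  have coreg := core hL1 hL2 hg
  have coreh := core hL1 hL2 hh
  have boundg : (∫ q in MSet L1 L2, ug q ^ 2) ≤ (K * (Ng * (Ng + Dg))) ^ 2 := by
    refine le_trans coreg ?_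
    have f1 : (1 / L1) * Sg + 2 * intOn L1 L2 (fun p => |g p * pdx g p|)
        ≤ K * (Ng * (Ng + Dg)) := by
      rw [hKdef]
      nlinarith [hXg, hNg0, hDg0, hNgsq, mul_nonneg hNg0 hDg0, sq_nonneg Ng,
        one_div_pos.mpr hL1, one_div_pos.mpr hL2]
    have f2 : (1 / L2) * Sg + 2 * intOn L1 L2 (fun p => |g p * pdy g p|)
        ≤ K * (Ng * (Ng + Dg)) := by
      rw [hKdef]
      nlinarith [hYg, hNg0, hDg0, hNgsq, mul_nonneg hNg0 hDg0, sq_nonneg Ng,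
        one_div_pos.mpr hL1, one_div_pos.mpr hL2]
    have f20 : 0 ≤ (1 / L2) * Sg + 2 * intOn L1 L2 (fun p => |g p * pdy g p|) := by
      positivity
    have fK0 : 0 ≤ K * (Ng * (Ng + Dg)) := by positivity
    calc ((1 / L1) * Sg + 2 * intOn L1 L2 (fun p => |g p * pdx g p|))
        * ((1 / L2) * Sg + 2 * intOn L1 L2 (fun p => |g p * pdy g p|))
        ≤ (K * (Ng * (Ng + Dg))) * (K * (Ng * (Ng + Dg))) := mul_le_mul f1 f2 f20 fK0
      _ = (K * (Ng * (Ng + Dg))) ^ 2 := (sq _).symm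
  have boundh : (∫ q in MSet L1 L2, uh q ^ 2) ≤ (K * (Nh * (Nh + Dh))) ^ 2 := by
    refine le_trans coreh ?_
    have f1 : (1 / L1) * Sh + 2 * intOn L1 L2 (fun p => |h p * pdx h p|)
        ≤ K * (Nh * (Nh + Dh)) := by
      rw [hKdef]
      nlinarith [hXh, hNh0, hDh0, hNhsq, mul_nonneg hNh0 hDh0, sq_nonneg Nh,
        one_div_pos.mpr hL1, one_div_pos.mpr hL2]
    have f2 : (1 / L2) * Sh + 2 * intOn L1 L2 (fun p => |h p * pdy h p|)
        ≤ K * (Nh * (Nh + Dh)) := by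
      rw [hKdef]
      nlinarith [hYh, hNh0, hDh0, hNhsq, mul_nonneg hNh0 hDh0, sq_nonneg Nh,
        one_div_pos.mpr hL1, one_div_pos.mpr hL2]
    have f20 : 0 ≤ (1 / L2) * Sh + 2 * intOn L1 L2 (fun p => |h p * pdy h p|) := by
      positivity
    have fK0 : 0 ≤ K * (Nh * (Nh + Dh)) := by positivity
    calc ((1 / L1) * Sh + 2 * intOn L1 L2 (fun p => |h p * pdx h p|))
        * ((1 / L2) * Sh + 2 * intOn L1 L2 (fun p => |h p * pdy h p|))
        ≤ (K * (Nh * (Nh + Dh))) * (K * (Nh * (Nh + Dh))) := mul_le_mul f1 f2 f20 fK0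
      _ = (K * (Nh * (Nh + Dh))) ^ 2 := (sq _).symm
  -- sqrt bounds
  have sqrtg : Real.sqrt (∫ q in MSet L1 L2, ug q ^ 2) ≤ K * (Ng * (Ng + Dg)) := by
    calc Real.sqrt (∫ q in MSet L1 L2, ug q ^ 2)
        ≤ Real.sqrt ((K * (Ng * (Ng + Dg))) ^ 2) := Real.sqrt_le_sqrt boundg
      _ = K * (Ng * (Ng + Dg)) := Real.sqrt_sq (by positivity)
  have sqrth : Real.sqrt (∫ q in MSet L1 L2, uh q ^ 2) ≤ K * (Nh * (Nh + Dh)) := by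
    calc Real.sqrt (∫ q in MSet L1 L2, uh q ^ 2)
        ≤ Real.sqrt ((K * (Nh * (Nh + Dh))) ^ 2) := Real.sqrt_le_sqrt boundh
      _ = K * (Nh * (Nh + Dh)) := Real.sqrt_sq (by positivity)
  -- combine: bound on √(∫ W²)
  have hWQ : Real.sqrt (∫ q in MSet L1 L2, W q ^ 2)
      ≤ Real.sqrt (K * (Ng * (Ng + Dg))) * Real.sqrt (K * (Nh * (Nh + Dh))) := by
    have hQle : (∫ q in MSet L1 L2, W q ^ 2)
        ≤ (K * (Ng * (Ng + Dg))) * (K * (Nh * (Nh + Dh))) := by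
      refine le_trans (le_trans stepC stepD) ?_
      refine mul_le_mul sqrtg sqrth (Real.sqrt_nonneg _) (by positivity)
    calc Real.sqrt (∫ q in MSet L1 L2, W q ^ 2)
        ≤ Real.sqrt ((K * (Ng * (Ng + Dg))) * (K * (Nh * (Nh + Dh)))) :=
          Real.sqrt_le_sqrt hQle
      _ = _ := Real.sqrt_mul (by positivity) _
  -- decompose the square roots
  have hdecg : Real.sqrt (K * (Ng * (Ng + Dg)))
      ≤ Real.sqrt K * (Real.sqrt Ng * (Real.sqrt Ng + Real.sqrt Dg)) := by
    rw [Real.sqrt_mul hK.le, Real.sqrt_mul hNg0]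
    refine mul_le_mul_of_nonneg_left ?_ (Real.sqrt_nonneg _)
    exact mul_le_mul_of_nonneg_left (sqrt_add_le Ng Dg hNg0 hDg0) (Real.sqrt_nonneg _)
  have hdech : Real.sqrt (K * (Nh * (Nh + Dh)))
      ≤ Real.sqrt K * (Real.sqrt Nh * (Real.sqrt Nh + Real.sqrt Dh)) := by
    rw [Real.sqrt_mul hK.le, Real.sqrt_mul hNh0]
    refine mul_le_mul_of_nonneg_left ?_ (Real.sqrt_nonneg _)
    exact mul_le_mul_of_nonneg_left (sqrt_add_le Nh Dh hNh0 hDh0) (Real.sqrt_nonneg _)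
  -- bound on √(∫ Ff²)
  have hPF : Real.sqrt (∫ q in MSet L1 L2, Ff q ^ 2) ≤ Real.sqrt 2 * Nf := by
    calc Real.sqrt (∫ q in MSet L1 L2, Ff q ^ 2)
        ≤ Real.sqrt (2 * Sf) := Real.sqrt_le_sqrt stepB
      _ = Real.sqrt 2 * Real.sqrt Sf := Real.sqrt_mul (by norm_num) _
      _ = Real.sqrt 2 * Nf := rfl
  -- final assembly
  have hWQ' : Real.sqrt (∫ q in MSet L1 L2, W q ^ 2)
      ≤ (Real.sqrt K * (Real.sqrt Ng * (Real.sqrt Ng + Real.sqrt Dg)))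
        * (Real.sqrt K * (Real.sqrt Nh * (Real.sqrt Nh + Real.sqrt Dh))) := by
    refine le_trans hWQ ?_
    exact mul_le_mul hdecg hdech (Real.sqrt_nonneg _) (by positivity)
  have final : (∫ q in MSet L1 L2, Ff q * W q)
      ≤ (Real.sqrt 2 * Nf)
        * ((Real.sqrt K * (Real.sqrt Ng * (Real.sqrt Ng + Real.sqrt Dg)))
          * (Real.sqrt K * (Real.sqrt Nh * (Real.sqrt Nh + Real.sqrt Dh)))) := by
    refine le_trans stepA ?_
    refine mul_le_mul hPF hWQ' (Real.sqrt_nonneg _) (by positivity)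
  have hKK : Real.sqrt K * Real.sqrt K = K := Real.mul_self_sqrt hK.le
  calc (∫ q in MSet L1 L2, Ff q * W q) ≤ _ := final
    _ = Real.sqrt 2 * K * Nf * Real.sqrt Ng * (Real.sqrt Ng + Real.sqrt Dg)
        * Real.sqrt Nh * (Real.sqrt Nh + Real.sqrt Dh) := by
      have e : Real.sqrt 2 * Nf
          * ((Real.sqrt K * (Real.sqrt Ng * (Real.sqrt Ng + Real.sqrt Dg)))
            * (Real.sqrt K * (Real.sqrt Nh * (Real.sqrt Nh + Real.sqrt Dh))))
          = Real.sqrt 2 * (Real.sqrt K * Real.sqrt K) * Nf * Real.sqrt Ng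
            * (Real.sqrt Ng + Real.sqrt Dg) * Real.sqrt Nh
            * (Real.sqrt Nh + Real.sqrt Dh) := by ring
      rw [e, hKK]
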